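/- Let F be an algebraically closed field and l ≥ 2. Let D denote the subgroup of GL_{2l}(F) consisting of all invertible diagonal matrices. Then the normalizer of T̄ in GL_{2l}(F) is the internal semidirect product of D by V̄; that is: D and V̄ both normalize T̄, D ∩ V̄ = {1}, and every element of N_{GL_{2l}(F)}(T̄) can be written as d·v with d ∈ D and v ∈ V̄. -/

import Mathlib

open Matrix

noncomputable section

variable (n : ℕ) (F : Type) [Field F]

/-- The antidiagonal matrix `J`: entry `(i,j)` (1-based) is `1` iff `i + j = n + 1`. -/
def Jmat : Matrix (Fin n) (Fin n) F :=
  Matrix.of fun i j => if (i : ℕ) + (j : ℕ) + 1 = n then 1 else 0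

/-- The permutation `ι` of `{1,…,n}` given (1-based) by `i ↦ n + 1 - i`. -/
def iotaPerm : Equiv.Perm (Fin n) where
  toFun i := ⟨n - 1 - (i : ℕ), by have := i.isLt; omega⟩
  invFun i := ⟨n - 1 - (i : ℕ), by have := i.isLt; omega⟩
  left_inv i := by have := i.isLt; apply Fin.ext; show n - 1 - (n - 1 - (i : ℕ)) = _; omega
  right_inv i := by have := i.isLt; apply Fin.ext; show n - 1 - (n - 1 - (i : ℕ)) = _; omega

/-- The permutation matrix `P_σ`, with `(i,j)` entry `1` iff `i = σ j`. -/
def permMat (σ : Equiv.Perm (Fin n)) : Matrix (Fin n) (Fin n) F :=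
  Matrix.of fun i j => if i = σ j then 1 else 0

lemma permMat_mul (σ τ : Equiv.Perm (Fin n)) :
    permMat n F σ * permMat n F τ = permMat n F (σ * τ) := by
  ext i j
  simp only [permMat, Matrix.mul_apply, Matrix.of_apply]
  rw [Finset.sum_eq_single (τ j)]
  · simp [Equiv.Perm.mul_apply] <;> congr
  · intro k _ hk; simp [hk]
  · intro h; simp at h

lemma permMat_one : permMat n F 1 = 1 := by
  ext i j
  simp [permMat, Matrix.one_apply] <;> congr

/-- The permutation matrix `P_σ` as an element of `GL_n(F)`. -/
def permGL (σ : Equiv.Perm (Fin n)) : GL (Fin n) F :=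
  ⟨permMat n F σ, permMat n F σ⁻¹,
    by rw [permMat_mul]; simp [permMat_one],
    by rw [permMat_mul]; simp [permMat_one]⟩

/-- The orthogonal group `O_J = {x ∈ GL_n(F) : xᵀ J x = J}` as a subgroup of `GL_n(F)`. -/
def OJ : Subgroup (GL (Fin n) F) where
  carrier := {x | (x : Matrix (Fin n) (Fin n) F)ᵀ * Jmat n F * (x : Matrix (Fin n) (Fin n) F) = Jmat n F}
  one_mem' := by simp
  mul_mem' := by
    intro a b ha hb
    simp only [Set.mem_setOf_eq] at ha hb ⊢
    rw [Units.val_mul, transpose_mul]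
    calc (b : Matrix (Fin n) (Fin n) F)ᵀ * (a : Matrix (Fin n) (Fin n) F)ᵀ * Jmat n F *
          ((a : Matrix (Fin n) (Fin n) F) * (b : Matrix (Fin n) (Fin n) F))
        = (b : Matrix (Fin n) (Fin n) F)ᵀ *
            ((a : Matrix (Fin n) (Fin n) F)ᵀ * Jmat n F * (a : Matrix (Fin n) (Fin n) F)) *
            (b : Matrix (Fin n) (Fin n) F) := by noncomm_ring
      _ = Jmat n F := by rw [ha, hb]
  inv_mem' := by
    intro a ha
    simp only [Set.mem_setOf_eq] at ha ⊢
    calc ((a⁻¹ : GL (Fin n) F) : Matrix (Fin n) (Fin n) F)ᵀ * Jmat n F *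
          ((a⁻¹ : GL (Fin n) F) : Matrix (Fin n) (Fin n) F)
        = ((a⁻¹ : GL (Fin n) F) : Matrix (Fin n) (Fin n) F)ᵀ *
            ((a : Matrix (Fin n) (Fin n) F)ᵀ * Jmat n F * (a : Matrix (Fin n) (Fin n) F)) *
            ((a⁻¹ : GL (Fin n) F) : Matrix (Fin n) (Fin n) F) := by rw [ha]
      _ = ((a : Matrix (Fin n) (Fin n) F) * ((a⁻¹ : GL (Fin n) F) : Matrix (Fin n) (Fin n) F))ᵀ *
            Jmat n F *
            ((a : Matrix (Fin n) (Fin n) F) * ((a⁻¹ : GL (Fin n) F) : Matrix (Fin n) (Fin n) F)) := by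
          rw [transpose_mul]; noncomm_ring
      _ = Jmat n F := by rw [Units.mul_inv]; simp

/-- `SL_n(F)` viewed as a subgroup of `GL_n(F)`. -/
def SLgl : Subgroup (GL (Fin n) F) where
  carrier := {x | (x : Matrix (Fin n) (Fin n) F).det = 1}
  one_mem' := by simp
  mul_mem' := by
    intro a b ha hb
    simp only [Set.mem_setOf_eq] at ha hb ⊢
    rw [Units.val_mul, det_mul, ha, hb, one_mul]
  inv_mem' := by
    intro a ha
    simp only [Set.mem_setOf_eq] at ha ⊢
    have h : ((a : Matrix (Fin n) (Fin n) F) * ((a⁻¹ : GL (Fin n) F) : Matrix (Fin n) (Fin n) F)).det = 1 := by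
      rw [Units.mul_inv]; simp
    rw [det_mul, ha, one_mul] at h
    exact h

/-- `SO_J := O_J ∩ SL_n(F)`. -/
def SOJ : Subgroup (GL (Fin n) F) := OJ n F ⊓ SLgl n F

/-- The diagonal matrices lying in a subgroup `G` of `GL_n(F)` form a subgroup. -/
def diagIn (G : Subgroup (GL (Fin n) F)) : Subgroup (GL (Fin n) F) where
  carrier := {x | x ∈ G ∧ (x : Matrix (Fin n) (Fin n) F).IsDiag}
  one_mem' := ⟨one_mem _, Matrix.isDiag_one⟩
  mul_mem' := by
    rintro a b ⟨haG, haD⟩ ⟨hbG, hbD⟩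
    refine ⟨mul_mem haG hbG, ?_⟩
    rw [Units.val_mul, ← haD.diagonal_diag, ← hbD.diagonal_diag, diagonal_mul_diagonal]
    exact isDiag_diagonal _
  inv_mem' := by
    rintro a ⟨haG, haD⟩
    refine ⟨inv_mem haG, ?_⟩
    rw [Matrix.coe_units_inv, ← haD.diagonal_diag, inv_diagonal]
    exact isDiag_diagonal _

/-- `T̄`, the subgroup of all diagonal matrices contained in `O_J`. -/
def Tbar : Subgroup (GL (Fin n) F) := diagIn n F (OJ n F)

/-- `V̄ = {P_σ : σ ∘ ι = ι ∘ σ}` as a subgroup of `GL_n(F)`. -/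
def Vbar : Subgroup (GL (Fin n) F) where
  carrier := {x | ∃ σ : Equiv.Perm (Fin n),
      σ * iotaPerm n = iotaPerm n * σ ∧ (x : Matrix (Fin n) (Fin n) F) = permMat n F σ}
  one_mem' := ⟨1, by simp, by simp [permMat_one]⟩
  mul_mem' := by
    rintro a b ⟨σ, hσ, ha⟩ ⟨τ, hτ, hb⟩
    refine ⟨σ * τ, ?_, ?_⟩
    · rw [mul_assoc, hτ, ← mul_assoc, hσ, mul_assoc]
    · rw [Units.val_mul, ha, hb, permMat_mul]
  inv_mem' := by
    rintro a ⟨σ, hσ, ha⟩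
    have hau : a = permGL n F σ := Units.ext ha
    exact ⟨σ⁻¹, (Commute.inv_left hσ : _), by rw [hau]; rfl⟩

/-- `W̄ := V̄ ∩ SL_n(F)`. -/
def Wbar : Subgroup (GL (Fin n) F) := Vbar n F ⊓ SLgl n F

end

/-- The subgroup `D` of all invertible diagonal matrices in `GL_n(F)`. -/
def diagGL (n : ℕ) (F : Type) [Field F] : Subgroup (GL (Fin n) F) := diagIn n F ⊤

/-! Since `F` is infinite, `T̄` contains an element `t` with pairwise distinct diagonal entries.
If `x` normalizes `T̄`, then `t' := x t x⁻¹` is diagonal and `t' x = x t`, so `x i j ≠ 0` forces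
`t' i i = t j j`: each row of `x` has a single nonzero entry and `x = d P_σ` is monomial, with
`t' i i = t (σ⁻¹ i) (σ⁻¹ i)`. Both `t` and `t'` satisfy `u i i * u (ι i) (ι i) = 1`, so
`t (σ⁻¹ (ι i))` and `t (ι (σ⁻¹ i))` are both inverse to `t (σ⁻¹ i)`; distinctness of the
entries gives `σ ι = ι σ`. -/

open Function

theorem Matrix.exists_perm_apply_ne_zero_iff_of_det_ne_zero {m R : Type*} [Fintype m]
    [DecidableEq m] [CommRing R] {x : Matrix m m R} (hx : x.det ≠ 0)
    (hrow : ∀ i j k, x i j ≠ 0 → x i k ≠ 0 → j = k) :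
    ∃ σ : Equiv.Perm m, ∀ i j, x i j ≠ 0 ↔ i = σ j := by
  have hne : ∀ i, ∃ j, x i j ≠ 0 := fun i => by
    by_contra! h
    exact hx (det_eq_zero_of_row_eq_zero i h)
  choose c hc using hne
  have hsurj : Surjective c := fun k => by
    by_contra! h
    exact hx (det_eq_zero_of_column_eq_zero k fun i =>
      by_contra fun hik => h i (hrow i _ _ (hc i) hik))
  let e := Equiv.ofBijective c ⟨Finite.injective_iff_surjective.2 hsurj, hsurj⟩
  refine ⟨e.symm, fun i j => ⟨fun hij => e.eq_symm_apply.2 (hrow i _ _ (hc i) hij), ?_⟩⟩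
  rintro rfl
  convert hc (e.symm j)
  exact (e.apply_symm_apply j).symm

theorem Matrix.IsDiag.apply_eq_of_mul_eq_mul {m R : Type*} [Fintype m] [DecidableEq m]
    [CommRing R] [IsDomain R] {A B x : Matrix m m R} (hA : A.IsDiag) (hB : B.IsDiag)
    (h : A * x = x * B) {i j : m} (hij : x i j ≠ 0) : A i i = B j j := by
  have hij' := congrFun (congrFun h i) j
  rw [← hA.diagonal_diag, ← hB.diagonal_diag, diagonal_mul, mul_diagonal] at hij'
  exact mul_right_cancel₀ hij (hij'.trans (mul_comm _ _))

section Normalizer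

variable {n : ℕ} {F : Type} [Field F]

lemma iotaPerm_val (i : Fin n) : (iotaPerm n i : ℕ) = n - 1 - i := rfl

lemma Jmat_apply (i j : Fin n) : Jmat n F i j = if j = iotaPerm n i then 1 else 0 := by
  have := i.isLt
  simp only [Jmat, of_apply, Fin.ext_iff, iotaPerm_val]
  congr 1
  exact propext (by omega)

lemma transpose_diagonal_mul_Jmat_mul_diagonal_eq_iff (f : Fin n → F) :
    (diagonal f)ᵀ * Jmat n F * diagonal f = Jmat n F ↔ ∀ i, f i * f (iotaPerm n i) = 1 := by
  rw [diagonal_transpose, ← Matrix.ext_iff]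
  simp only [mul_diagonal, diagonal_mul, Jmat_apply]
  refine ⟨fun h i => by simpa using h i (iotaPerm n i), fun h i j => ?_⟩
  split_ifs with hj
  · rw [hj, mul_one, h]
  · simp

lemma mem_OJ_iff_of_isDiag {u : GL (Fin n) F} (hu : (u : Matrix (Fin n) (Fin n) F).IsDiag) :
    u ∈ OJ n F ↔ ∀ i, (u : Matrix (Fin n) (Fin n) F) i i *
      (u : Matrix (Fin n) (Fin n) F) (iotaPerm n i) (iotaPerm n i) = 1 := by
  change _ * _ * _ = _ ↔ _
  conv_lhs => rw [← hu.diagonal_diag]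
  exact transpose_diagonal_mul_Jmat_mul_diagonal_eq_iff _

lemma mem_Tbar_iff {t : GL (Fin n) F} :
    t ∈ Tbar n F ↔ (t : Matrix (Fin n) (Fin n) F).IsDiag ∧
      ∀ i, (t : Matrix (Fin n) (Fin n) F) i i *
        (t : Matrix (Fin n) (Fin n) F) (iotaPerm n i) (iotaPerm n i) = 1 :=
  ⟨fun ht => ⟨ht.2, (mem_OJ_iff_of_isDiag ht.2).1 ht.1⟩,
    fun ⟨hd, h⟩ => ⟨(mem_OJ_iff_of_isDiag hd).2 h, hd⟩⟩

lemma mem_diagGL_iff {x : GL (Fin n) F} :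
    x ∈ diagGL n F ↔ (x : Matrix (Fin n) (Fin n) F).IsDiag :=
  ⟨And.right, fun h => ⟨Subgroup.mem_top x, h⟩⟩

lemma diagGL_le_centralizer_Tbar :
    diagGL n F ≤ Subgroup.centralizer (Tbar n F : Set (GL (Fin n) F)) := by
  intro d hd
  rw [Subgroup.mem_centralizer_iff]
  intro t ht
  ext1
  rw [Units.val_mul, Units.val_mul, ← (mem_Tbar_iff.1 ht).1.diagonal_diag,
    ← (mem_diagGL_iff.1 hd).diagonal_diag, diagonal_mul_diagonal, diagonal_mul_diagonal]
  simp only [mul_comm]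

lemma permMat_mul_apply (σ : Equiv.Perm (Fin n)) (A : Matrix (Fin n) (Fin n) F) (i j : Fin n) :
    (permMat n F σ * A) i j = A (σ⁻¹ i) j := by
  simp [permMat, mul_apply, ← Equiv.symm_apply_eq]

lemma mul_permMat_apply (A : Matrix (Fin n) (Fin n) F) (σ : Equiv.Perm (Fin n)) (i j : Fin n) :
    (A * permMat n F σ) i j = A i (σ j) := by
  simp [permMat, mul_apply]

lemma permGL_conj_apply (σ : Equiv.Perm (Fin n)) (t : GL (Fin n) F) (i j : Fin n) :
    ((permGL n F σ * t * (permGL n F σ)⁻¹ : GL (Fin n) F) : Matrix (Fin n) (Fin n) F) i j =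
      (t : Matrix (Fin n) (Fin n) F) (σ⁻¹ i) (σ⁻¹ j) := by
  change (permMat n F σ * t * permMat n F σ⁻¹) i j = _
  rw [mul_permMat_apply, permMat_mul_apply]

lemma permGL_conj_mem_Tbar {σ : Equiv.Perm (Fin n)} (hσ : Commute σ (iotaPerm n))
    {t : GL (Fin n) F} (ht : t ∈ Tbar n F) :
    permGL n F σ * t * (permGL n F σ)⁻¹ ∈ Tbar n F := by
  obtain ⟨hdiag, hι⟩ := mem_Tbar_iff.1 ht
  have hσι : ∀ i, σ⁻¹ (iotaPerm n i) = iotaPerm n (σ⁻¹ i) := fun i =>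
    DFunLike.congr_fun hσ.inv_left.eq i
  refine mem_Tbar_iff.2 ⟨fun i j hij => ?_, fun i => ?_⟩
  · exact (permGL_conj_apply σ t i j).trans (hdiag (σ⁻¹.injective.ne hij))
  · simp only [permGL_conj_apply, hσι, hι]

lemma Vbar_le_normalizer_Tbar :
    Vbar n F ≤ Subgroup.normalizer (Tbar n F : Set (GL (Fin n) F)) := by
  rw [Subgroup.le_set_normalizer_iff]
  rintro v ⟨σ, hσ, hv⟩ t ht
  obtain rfl : v = permGL n F σ := Units.ext hv
  exact permGL_conj_mem_Tbar hσ ht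

lemma eq_one_of_isDiag_permMat {σ : Equiv.Perm (Fin n)} (h : (permMat n F σ).IsDiag) :
    σ = 1 := by
  ext j
  by_contra hj
  simpa [permMat] using h (i := σ j) (j := j) (fun h' => hj (congrArg Fin.val h'))

lemma diagGL_inf_Vbar : diagGL n F ⊓ Vbar n F = ⊥ := by
  rw [Subgroup.eq_bot_iff_forall]
  intro x hx
  obtain ⟨hd, σ, -, hx⟩ := Subgroup.mem_inf.1 hx
  rw [mem_diagGL_iff, hx] at hd
  ext1
  rw [hx, eq_one_of_isDiag_permMat hd, permMat_one, Units.val_one]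

lemma commute_iotaPerm_of_injective {M : Type*} [CommMonoid M] {a : Fin n → M}
    (ha : Injective a) (hι : ∀ i, a i * a (iotaPerm n i) = 1) {τ : Equiv.Perm (Fin n)}
    (hτ : ∀ i, a (τ i) * a (τ (iotaPerm n i)) = 1) : Commute τ (iotaPerm n) :=
  Equiv.ext fun i => ha (left_inv_eq_right_inv ((mul_comm _ _).trans (hτ i)) (hι (τ i)))

lemma exists_mem_diagGL_mem_Vbar_of_mem_normalizer {t x : GL (Fin n) F} (ht : t ∈ Tbar n F)
    (hreg : Injective (t : Matrix (Fin n) (Fin n) F).diag)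
    (hx : x ∈ Subgroup.normalizer (Tbar n F : Set (GL (Fin n) F))) :
    ∃ d ∈ diagGL n F, ∃ v ∈ Vbar n F, x = d * v := by
  obtain ⟨htd, htι⟩ := mem_Tbar_iff.1 ht
  obtain ⟨ht'd, ht'ι⟩ := mem_Tbar_iff.1 ((Subgroup.mem_normalizer_iff.1 hx t).1 ht)
  have hcomm : ((x * t * x⁻¹ : GL (Fin n) F) : Matrix (Fin n) (Fin n) F) * x = x * t := by
    rw [← Units.val_mul, ← Units.val_mul, inv_mul_cancel_right]
  have heig := fun i j => ht'd.apply_eq_of_mul_eq_mul htd hcomm (i := i) (j := j)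
  obtain ⟨σ, hσ⟩ := exists_perm_apply_ne_zero_iff_of_det_ne_zero x.det_ne_zero
    fun i j k hj hk => hreg ((heig i j hj).symm.trans (heig i k hk))
  have hconj : ∀ i, ((x * t * x⁻¹ : GL (Fin n) F) : Matrix (Fin n) (Fin n) F) i i =
      (t : Matrix (Fin n) (Fin n) F) (σ⁻¹ i) (σ⁻¹ i) :=
    fun i => heig i _ ((hσ i _).2 (σ.apply_symm_apply i).symm)
  have hσι : Commute σ⁻¹ (iotaPerm n) :=
    commute_iotaPerm_of_injective hreg htι fun i => by
      simpa only [Matrix.diag_apply, hconj] using ht'ι i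
  refine ⟨x * (permGL n F σ)⁻¹, mem_diagGL_iff.2 fun i j hij => ?_, permGL n F σ,
    ⟨σ, by simpa using hσι.inv_left.eq, rfl⟩, (inv_mul_cancel_right x _).symm⟩
  change (x * permMat n F σ⁻¹ : Matrix (Fin n) (Fin n) F) i j = 0
  rw [mul_permMat_apply]
  by_contra h
  exact hij (((hσ i _).1 h).trans (σ.apply_symm_apply j))

end Normalizer

section RegularElement

variable (F : Type) [Field F] [Infinite F]

lemma exists_finset_card_eq_forall_mul_ne_one (m : ℕ) :
    ∃ s : Finset F, s.card = m ∧ 0 ∉ s ∧ ∀ a ∈ s, ∀ b ∈ s, a * b ≠ 1 := by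
  classical
  induction m with
  | zero => exact ⟨∅, by simp⟩
  | succ m ih =>
    obtain ⟨s, hcard, hs0, hs1⟩ := ih
    obtain ⟨c, hc⟩ := Infinite.exists_notMem_finset (s ∪ s.image (·⁻¹) ∪ {0, 1, -1})
    simp only [Finset.mem_union, Finset.mem_image, Finset.mem_insert, Finset.mem_singleton,
      not_or, not_exists, not_and] at hc
    obtain ⟨⟨hcs, hcs'⟩, hc0, hc1, hcn1⟩ := hc
    have hcb : ∀ b ∈ s, c * b ≠ 1 := fun b hb h =>
      hcs' b hb (eq_inv_of_mul_eq_one_left h).symm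
    refine ⟨insert c s, by rw [Finset.card_insert_of_notMem hcs, hcard], ?_, ?_⟩
    · simp [hs0, Ne.symm hc0]
    · simp only [Finset.mem_insert, forall_eq_or_imp]
      refine ⟨⟨fun h => (mul_self_eq_one_iff.1 h).elim hc1 hcn1, hcb⟩,
        fun a ha => ⟨fun h => hcb a ha (by rwa [mul_comm]), hs1 a ha⟩⟩

lemma exists_injective_mul_iotaPerm_eq_one (l : ℕ) :
    ∃ a : Fin (2 * l) → F, Injective a ∧ ∀ i, a i * a (iotaPerm (2 * l) i) = 1 := by
  obtain ⟨s, hcard, hs0, hs1⟩ := exists_finset_card_eq_forall_mul_ne_one F l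
  let e := s.equivFinOfCardEq hcard
  let g : ℕ → F := fun k => if h : k < l then (e.symm ⟨k, h⟩ : F) else 0
  have hg_mem : ∀ k < l, g k ∈ s := fun k hk => by simp [g, hk]
  have hg_ne : ∀ k < l, g k ≠ 0 := fun k hk h => hs0 (h ▸ hg_mem k hk)
  have hg_inj : ∀ j < l, ∀ k < l, g j = g k → j = k := fun j hj k hk h =>
    congrArg Fin.val <| e.symm.injective <| Subtype.ext <| by
      simpa only [g, dif_pos hj, dif_pos hk] using h
  have hg_ne_inv : ∀ j < l, ∀ k < l, g j ≠ (g k)⁻¹ := fun j hj k hk h =>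
    hs1 _ (hg_mem j hj) _ (hg_mem k hk) (by rw [h, inv_mul_cancel₀ (hg_ne k hk)])
  -- `a = (g 0, …, g (l-1), (g (l-1))⁻¹, …, (g 0)⁻¹)`; its entries are distinct because
  -- no product `g j * g k` is `1`.
  refine ⟨fun i => if (i : ℕ) < l then g i else (g (2 * l - 1 - i))⁻¹, fun i j hij => ?_,
    fun i => ?_⟩
  · have := i.isLt
    have := j.isLt
    apply Fin.ext
    dsimp only at hij
    split_ifs at hij with hi hj hj
    · exact hg_inj _ hi _ hj hij
    · exact absurd hij (hg_ne_inv _ hi _ (by omega))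
    · exact absurd hij.symm (hg_ne_inv _ hj _ (by omega))
    · have := hg_inj _ (by omega) _ (by omega) (inv_injective hij)
      omega
  · have hι : (iotaPerm (2 * l) i : ℕ) = 2 * l - 1 - i := rfl
    have := i.isLt
    dsimp only
    split_ifs with hi hi' hi'
    · omega
    · rw [show 2 * l - 1 - (iotaPerm (2 * l) i : ℕ) = i by omega, mul_inv_cancel₀ (hg_ne _ hi)]
    · rw [← hι, inv_mul_cancel₀ (hg_ne _ hi')]
    · omega

lemma exists_mem_Tbar_injective_diag (l : ℕ) :
    ∃ t ∈ Tbar (2 * l) F, Injective (t : Matrix (Fin (2 * l)) (Fin (2 * l)) F).diag := by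
  obtain ⟨a, ha, hι⟩ := exists_injective_mul_iotaPerm_eq_one F l
  have hinv : diagonal a * diagonal (a ∘ iotaPerm (2 * l)) = 1 := by
    simp [diagonal_mul_diagonal, hι]
  refine ⟨⟨diagonal a, _, hinv, mul_eq_one_comm.1 hinv⟩,
    mem_Tbar_iff.2 ⟨isDiag_diagonal a, fun i => by simpa using hι i⟩, by simpa using ha⟩

end RegularElement

theorem normalizer_Tbar_in_GL_eq_diag_mul_Vbar_general
    (F : Type) [Field F] [IsAlgClosed F] (l : ℕ) :
    diagGL (2 * l) F ≤ Subgroup.normalizer (Tbar (2 * l) F : Set (GL (Fin (2 * l)) F)) ∧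
    Vbar (2 * l) F ≤ Subgroup.normalizer (Tbar (2 * l) F : Set (GL (Fin (2 * l)) F)) ∧
    diagGL (2 * l) F ⊓ Vbar (2 * l) F = ⊥ ∧
    ∀ x ∈ Subgroup.normalizer (Tbar (2 * l) F : Set (GL (Fin (2 * l)) F)),
      ∃ d ∈ diagGL (2 * l) F, ∃ v ∈ Vbar (2 * l) F, x = d * v := by
  obtain ⟨t, ht, hreg⟩ := exists_mem_Tbar_injective_diag F l
  exact ⟨diagGL_le_centralizer_Tbar.trans (Subgroup.centralizer_le_normalizer _),
    Vbar_le_normalizer_Tbar, diagGL_inf_Vbar,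
    fun x hx => exists_mem_diagGL_mem_Vbar_of_mem_normalizer ht hreg hx⟩

/-- For `F` algebraically closed and `l ≥ 2`, the normalizer of `T̄` in
`GL_{2l}(F)` is the internal semidirect product of `D` (invertible diagonal matrices) by `V̄`. -/
theorem normalizer_Tbar_in_GL_eq_diag_mul_Vbar
    (F : Type) [Field F] [IsAlgClosed F] (l : ℕ) (hl : 2 ≤ l) :
    diagGL (2 * l) F ≤ Subgroup.normalizer (Tbar (2 * l) F : Set (GL (Fin (2 * l)) F)) ∧
    Vbar (2 * l) F ≤ Subgroup.normalizer (Tbar (2 * l) F : Set (GL (Fin (2 * l)) F)) ∧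
    diagGL (2 * l) F ⊓ Vbar (2 * l) F = ⊥ ∧
    ∀ x ∈ Subgroup.normalizer (Tbar (2 * l) F : Set (GL (Fin (2 * l)) F)),
      ∃ d ∈ diagGL (2 * l) F, ∃ v ∈ Vbar (2 * l) F, x = d * v :=
  normalizer_Tbar_in_GL_eq_diag_mul_Vbar_general F l
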